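/- For a bipartite density matrix ρ^{AB}, the relative entropy of nonlocality plus the minimal quantum side information equals the quantum mutual information: N_RE(ρ^{AB}) + S_χ(ρ^{AB}) = I(ρ^{AB}), where S_χ(ρ^{AB}) = min over locally invariant measurements {Π_k^B} of [S(ρ^A) − Σ_k p_k S(ρ_k^A)] and I(ρ^{AB}) = S(ρ^A) + S(ρ^B) − S(ρ^{AB}). -/

import Mathlib

open scoped Kronecker Classical ComplexOrder
open Matrix

noncomputable section

variable {n : Type*} [Fintype n] [DecidableEq n]

/-- A density matrix: positive semidefinite with unit trace. -/
def IsDensity (ρ : Matrix n n ℂ) : Prop := ρ.PosSemidef ∧ ρ.trace = 1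

/-- von Neumann entropy (base 2), via eigenvalues; junk value 0 for non-Hermitian input. -/
def vnEntropy (A : Matrix n n ℂ) : ℝ :=
  if h : A.IsHermitian then -∑ i, h.eigenvalues i * Real.logb 2 (h.eigenvalues i) else 0

/-- Matrix logarithm (base 2) via the spectral decomposition; junk value 0 for
non-Hermitian input.  The convention `Real.logb 2 0 = 0` handles zero eigenvalues. -/
def matLog (A : Matrix n n ℂ) : Matrix n n ℂ :=
  if h : A.IsHermitian then
    (h.eigenvectorUnitary : Matrix n n ℂ) *
      Matrix.diagonal (fun i => (Real.logb 2 (h.eigenvalues i) : ℂ)) *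
      (star (h.eigenvectorUnitary : Matrix n n ℂ))
  else 0

/-- Quantum relative entropy  S(ρ‖σ) = Tr ρ (log₂ ρ − log₂ σ)  (real part of the trace). -/
def relEntropy (ρ σ : Matrix n n ℂ) : ℝ :=
  ((ρ * (matLog ρ - matLog σ)).trace).re

variable {a b : Type*} [Fintype a] [DecidableEq a] [Fintype b] [DecidableEq b]
variable {ι : Type*} [Fintype ι]

/-- Partial trace over the first (A) factor. -/
def ptraceA (ρ : Matrix (a × b) (a × b) ℂ) : Matrix b b ℂ := fun i j => ∑ x, ρ (x, i) (x, j)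

/-- Partial trace over the second (B) factor. -/
def ptraceB (ρ : Matrix (a × b) (a × b) ℂ) : Matrix a a ℂ := fun i j => ∑ y, ρ (i, y) (j, y)

/-- A projective measurement: mutually orthogonal Hermitian projections summing to the identity. -/
def IsProjMeas (P : ι → Matrix b b ℂ) : Prop :=
  (∀ k, (P k).IsHermitian) ∧ (∀ j k, P j * P k = if j = k then P k else 0) ∧ ∑ k, P k = 1

/-- A rank-one projective measurement (each projection has trace one). -/
def IsRankOneMeas (P : ι → Matrix b b ℂ) : Prop :=
  IsProjMeas P ∧ ∀ k, (P k).trace = 1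

/-- The measurement leaves the state `ρB` invariant. -/
def Invariant (P : ι → Matrix b b ℂ) (ρB : Matrix b b ℂ) : Prop :=
  ∑ k, P k * ρB * P k = ρB

/-- Post-measurement state for a measurement on the B subsystem. -/
def postMeas (P : ι → Matrix b b ℂ) (ρ : Matrix (a × b) (a × b) ℂ) :
    Matrix (a × b) (a × b) ℂ :=
  ∑ k, ((1 : Matrix a a ℂ) ⊗ₖ P k) * ρ * ((1 : Matrix a a ℂ) ⊗ₖ P k)

/-- Probability of outcome `k`. -/
def probOf (P : ι → Matrix b b ℂ) (ρ : Matrix (a × b) (a × b) ℂ) (k : ι) : ℝ :=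
  (((1 : Matrix a a ℂ) ⊗ₖ P k) * ρ).trace.re

/-- Conditional state of A given outcome `k`. -/
def condA (P : ι → Matrix b b ℂ) (ρ : Matrix (a × b) (a × b) ℂ) (k : ι) : Matrix a a ℂ :=
  ((((1 : Matrix a a ℂ) ⊗ₖ P k) * ρ).trace)⁻¹ •
    ptraceB (((1 : Matrix a a ℂ) ⊗ₖ P k) * ρ * ((1 : Matrix a a ℂ) ⊗ₖ P k))

/-- Relative entropy of nonlocality: supremum of S(ρ‖ρ̃) over rank-one projective
measurements on B leaving ρ^B invariant. -/
def NRE (ρ : Matrix (a × b) (a × b) ℂ) : ℝ :=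
  sSup {x | ∃ P : b → Matrix b b ℂ, IsRankOneMeas P ∧ Invariant P (ptraceA ρ) ∧
    x = relEntropy ρ (postMeas P ρ)}

/-- Minimal quantum side information. -/
def Schi (ρ : Matrix (a × b) (a × b) ℂ) : ℝ :=
  sInf {x | ∃ P : b → Matrix b b ℂ, IsRankOneMeas P ∧ Invariant P (ptraceA ρ) ∧
    x = vnEntropy (ptraceB ρ) - ∑ k, probOf P ρ k * vnEntropy (condA P ρ k)}


/-!
Write a rank-one measurement as `Π_k = |u_k⟩⟨u_k|` for an orthonormal basis `(u_k)` of `B`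
(the columns of a unitary `U`). Each block `(1 ⊗ Π_k) ρ (1 ⊗ Π_k)` equals `M_k ⊗ Π_k` with
`M_k = p_k ρ_k^A`, so the post-measurement state `ρ̃ = ∑_k M_k ⊗ Π_k` is diagonalised block by
block, `S(ρ̃) = ∑_k S(M_k) = H(p) + ∑_k p_k S(ρ_k^A)`, and `log ρ̃ = ∑_k log M_k ⊗ Π_k` commutes with
every `1 ⊗ Π_k`. The latter gives `Tr ρ log ρ̃ = Tr ρ̃ log ρ̃`, hence `S(ρ‖ρ̃) = S(ρ̃) - S(ρ)`.
Invariance of `ρ^B` means `ρ^B = ∑_k p_k Π_k`, so `H(p) = S(ρ^B)` and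
`S(ρ‖ρ̃) = S(ρ^B) + ∑_k p_k S(ρ_k^A) - S(ρ)`. Thus, measurement by measurement, the quantity
minimised in `S_χ` is `I(ρ)` minus the quantity maximised in `N_RE`; the supremum is over a
nonempty set (the eigenbasis of `ρ^B`) that is bounded above (entropies are at most `dim / ln 2`).
-/

section Spectral

variable {m : Type*} [Fintype m] [DecidableEq m]

lemma Matrix.IsHermitian.eq_conj_diagonal {A : Matrix m m ℂ} (hA : A.IsHermitian) :
    A = (hA.eigenvectorUnitary : Matrix m m ℂ) * diagonal (fun i => (hA.eigenvalues i : ℂ)) *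
      star (hA.eigenvectorUnitary : Matrix m m ℂ) := by
  conv_lhs => rw [hA.spectral_theorem]
  rfl

lemma isHermitian_conj_diagonal_ofReal (V : Matrix m m ℂ) (μ : m → ℝ) :
    (V * diagonal (fun i => (μ i : ℂ)) * star V).IsHermitian :=
  isHermitian_mul_mul_conjTranspose V
    (isHermitian_diagonal_of_self_adjoint _ (funext fun i => Complex.conj_ofReal (μ i)))

lemma trace_conj_diagonal {V : Matrix m m ℂ} (hV : V ∈ unitaryGroup m ℂ) (d : m → ℂ) :
    (V * diagonal d * star V).trace = ∑ i, d i := by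
  rw [trace_mul_cycle, Unitary.star_mul_self_of_mem hV, Matrix.one_mul, trace_diagonal]

lemma star_mul_conj_mul_self {V : Matrix m m ℂ} (hV : V ∈ unitaryGroup m ℂ) (D : Matrix m m ℂ) :
    star V * (V * D * star V) * V = D := by
  simp only [Matrix.mul_assoc, Unitary.star_mul_self_of_mem hV, Matrix.mul_one]
  simp only [← Matrix.mul_assoc, Unitary.star_mul_self_of_mem hV, Matrix.one_mul]

lemma conj_diagonal_mul_conj_diagonal {V : Matrix m m ℂ} (hV : V ∈ unitaryGroup m ℂ)
    (d e : m → ℂ) :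
    V * diagonal d * star V * (V * diagonal e * star V) = V * diagonal (d * e) * star V := by
  simp only [Matrix.mul_assoc]
  rw [← Matrix.mul_assoc (star V), Unitary.star_mul_self_of_mem hV, Matrix.one_mul,
    ← Matrix.mul_assoc (diagonal d), diagonal_mul_diagonal]
  rfl

/-- `W = U⋆V` intertwines `diagonal μ` and `diagonal ν`; since `W i j ≠ 0` forces `μ j = ν i`,
it also intertwines `diagonal (f ∘ μ)` and `diagonal (f ∘ ν)`. -/
lemma conj_diagonal_comp_eq {V U : Matrix m m ℂ} (hV : V ∈ unitaryGroup m ℂ)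
    (hU : U ∈ unitaryGroup m ℂ) {μ ν : m → ℝ}
    (h : V * diagonal (fun i => (μ i : ℂ)) * star V = U * diagonal (fun i => (ν i : ℂ)) * star U)
    (f : ℝ → ℝ) :
    V * diagonal (fun i => (f (μ i) : ℂ)) * star V =
      U * diagonal (fun i => (f (ν i) : ℂ)) * star U := by
  have hVV := Unitary.star_mul_self_of_mem hV
  have hUU := Unitary.star_mul_self_of_mem hU
  have hUU' := Unitary.mul_star_self_of_mem hU
  have hVV' := Unitary.mul_star_self_of_mem hV
  have hW : star U * V * diagonal (fun i => (μ i : ℂ)) =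
      diagonal (fun i => (ν i : ℂ)) * (star U * V) := by
    have := congrArg (fun X => star U * X * V) h
    simpa only [Matrix.mul_assoc, hVV, Matrix.mul_one, ← Matrix.mul_assoc (star U) U, hUU,
      Matrix.one_mul] using this
  have hWf : star U * V * diagonal (fun i => (f (μ i) : ℂ)) =
      diagonal (fun i => (f (ν i) : ℂ)) * (star U * V) := by
    ext i j
    have hij := congrFun (congrFun hW i) j
    simp only [mul_diagonal, diagonal_mul] at hij ⊢
    by_cases hz : (star U * V) i j = 0
    · simp [hz]
    · rw [mul_comm] at hij
      have : μ j = ν i := by exact_mod_cast mul_right_cancel₀ hz hij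
      rw [this, mul_comm]
  calc V * diagonal (fun i => (f (μ i) : ℂ)) * star V
      = U * (star U * V * diagonal (fun i => (f (μ i) : ℂ))) * star V := by
        simp only [← Matrix.mul_assoc, hUU', Matrix.one_mul]
    _ = U * diagonal (fun i => (f (ν i) : ℂ)) * star U := by
        rw [hWf]
        simp only [Matrix.mul_assoc, hVV', Matrix.mul_one]

lemma matLog_eq_conj_diagonal {A V : Matrix m m ℂ} (hV : V ∈ unitaryGroup m ℂ) {μ : m → ℝ}
    (hA : A = V * diagonal (fun i => (μ i : ℂ)) * star V) :
    matLog A = V * diagonal (fun i => (Real.logb 2 (μ i) : ℂ)) * star V := by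
  have hH : A.IsHermitian := hA ▸ isHermitian_conj_diagonal_ofReal V μ
  rw [matLog, dif_pos hH]
  exact (conj_diagonal_comp_eq hV hH.eigenvectorUnitary.2
    (hA.symm.trans hH.eq_conj_diagonal) _).symm

lemma vnEntropy_eq_of_eq_conj_diagonal {A V : Matrix m m ℂ} (hV : V ∈ unitaryGroup m ℂ)
    {μ : m → ℝ} (hA : A = V * diagonal (fun i => (μ i : ℂ)) * star V) :
    vnEntropy A = -∑ i, μ i * Real.logb 2 (μ i) := by
  have hH : A.IsHermitian := hA ▸ isHermitian_conj_diagonal_ofReal V μ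
  have key := congrArg (fun X => (trace X).re) <| conj_diagonal_comp_eq hV
    hH.eigenvectorUnitary.2 (hA.symm.trans hH.eq_conj_diagonal) (fun x => x * Real.logb 2 x)
  simp only [trace_conj_diagonal hV, trace_conj_diagonal hH.eigenvectorUnitary.2] at key
  push_cast at key
  rw [vnEntropy, dif_pos hH]
  exact_mod_cast congrArg Neg.neg key.symm

lemma vnEntropy_eq_neg_re_trace_mul_matLog {A : Matrix m m ℂ} (hA : A.IsHermitian) :
    vnEntropy A = -(A * matLog A).trace.re := by
  obtain ⟨V, hV, μ, hAV⟩ : ∃ V ∈ unitaryGroup m ℂ, ∃ μ : m → ℝ,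
      A = V * diagonal (fun i => (μ i : ℂ)) * star V :=
    ⟨_, hA.eigenvectorUnitary.2, _, hA.eq_conj_diagonal⟩
  rw [vnEntropy_eq_of_eq_conj_diagonal hV hAV, matLog_eq_conj_diagonal hV hAV, hAV,
    conj_diagonal_mul_conj_diagonal hV, trace_conj_diagonal hV]
  simp

end Spectral

section Projections

variable {m : Type*} [Fintype m]

def colProj (U : Matrix m m ℂ) (k : m) : Matrix m m ℂ :=
  vecMulVec (U.col k) (star (U.col k))

lemma star_col_dotProduct_mulVec_col (U X : Matrix m m ℂ) (j k : m) :
    star (U.col j) ⬝ᵥ X *ᵥ U.col k = (star U * X * U) j k := by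
  simp only [dotProduct, mulVec, Matrix.mul_apply, col_apply, star_apply, Pi.star_apply,
    Finset.mul_sum, Finset.sum_mul, mul_assoc]
  exact Finset.sum_comm

lemma colProj_mul_mul_colProj (U X : Matrix m m ℂ) (k : m) :
    colProj U k * X * colProj U k = (star U * X * U) k k • colProj U k := by
  rw [colProj, vecMulVec_mul, vecMulVec_mul_vecMulVec, vecMulVec_smul, ← dotProduct_mulVec,
    star_col_dotProduct_mulVec_col]

lemma trace_colProj_mul (U X : Matrix m m ℂ) (k : m) :
    (colProj U k * X).trace = (star U * X * U) k k := by
  rw [colProj, vecMulVec_mul, trace_vecMulVec, dotProduct_comm, ← dotProduct_mulVec,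
    star_col_dotProduct_mulVec_col]

variable [DecidableEq m]

lemma star_col_dotProduct_col (U : Matrix m m ℂ) (j k : m) :
    star (U.col j) ⬝ᵥ U.col k = (star U * U) j k := by
  simpa using star_col_dotProduct_mulVec_col U 1 j k

lemma sum_smul_colProj (U : Matrix m m ℂ) (c : m → ℂ) :
    ∑ k, c k • colProj U k = U * diagonal c * star U := by
  ext y z
  rw [Matrix.mul_apply, Matrix.sum_apply]
  simp only [colProj, Matrix.smul_apply, vecMulVec_apply, mul_diagonal, col_apply, star_apply,
    Pi.star_apply, smul_eq_mul]
  exact Finset.sum_congr rfl fun k _ => by ring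

lemma colProj_eq_mul_single_mul (U : Matrix m m ℂ) (k : m) :
    colProj U k = U * single k k 1 * star U := by
  rw [← diagonal_single, ← sum_smul_colProj]
  simp [Pi.single_apply]

lemma sum_colProj_mul_mul_colProj (U X : Matrix m m ℂ) :
    ∑ k, colProj U k * X * colProj U k = U * diagonal (fun k => (star U * X * U) k k) * star U := by
  simp only [colProj_mul_mul_colProj, sum_smul_colProj]

variable {U : Matrix m m ℂ}

lemma colProj_mul_self (hU : U ∈ unitaryGroup m ℂ) (k : m) :
    colProj U k * colProj U k = colProj U k := by
  rw [colProj, vecMulVec_mul_vecMulVec, star_col_dotProduct_col,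
    Unitary.star_mul_self_of_mem hU, one_apply_eq, one_smul]

lemma colProj_mul_colProj_of_ne (hU : U ∈ unitaryGroup m ℂ) {j k : m} (h : j ≠ k) :
    colProj U j * colProj U k = 0 := by
  rw [colProj, colProj, vecMulVec_mul_vecMulVec, star_col_dotProduct_col,
    Unitary.star_mul_self_of_mem hU, one_apply_ne h, zero_smul, vecMulVec_zero]

lemma commute_colProj (hU : U ∈ unitaryGroup m ℂ) (j k : m) :
    Commute (colProj U j) (colProj U k) := by
  by_cases h : j = k
  · exact h ▸ Commute.refl _
  · exact (colProj_mul_colProj_of_ne hU h).trans (colProj_mul_colProj_of_ne hU (Ne.symm h)).symm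

lemma isRankOneMeas_colProj (hU : U ∈ unitaryGroup m ℂ) : IsRankOneMeas (colProj U) := by
  refine ⟨⟨fun k => ?_, fun j k => ?_, ?_⟩, fun k => ?_⟩
  · simp [colProj, IsHermitian]
  · split_ifs with h
    · exact h ▸ colProj_mul_self hU k
    · exact colProj_mul_colProj_of_ne hU h
  · simpa [Unitary.mul_star_self_of_mem hU] using sum_smul_colProj U 1
  · rw [colProj, trace_vecMulVec, dotProduct_comm, star_col_dotProduct_col,
      Unitary.star_mul_self_of_mem hU, one_apply_eq]

lemma invariant_colProj (hU : U ∈ unitaryGroup m ℂ) (d : m → ℂ) :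
    Invariant (colProj U) (U * diagonal d * star U) := by
  rw [Invariant, sum_colProj_mul_mul_colProj, star_mul_conj_mul_self hU]
  simp

lemma Matrix.IsHermitian.eigenvalues_mul_self_of_idempotent {Q : Matrix m m ℂ}
    (hH : Q.IsHermitian) (hQ : Q * Q = Q) (i : m) :
    hH.eigenvalues i * hH.eigenvalues i = hH.eigenvalues i := by
  set U := (hH.eigenvectorUnitary : Matrix m m ℂ)
  have hU : U ∈ unitaryGroup m ℂ := hH.eigenvectorUnitary.2
  have hD : star U * Q * U = diagonal (fun i => (hH.eigenvalues i : ℂ)) := by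
    conv_lhs => rw [hH.eq_conj_diagonal]
    exact star_mul_conj_mul_self hU _
  have hDD : star U * Q * U * (star U * Q * U) = star U * Q * U := by
    simp only [Matrix.mul_assoc, ← Matrix.mul_assoc U, Unitary.mul_star_self_of_mem hU,
      Matrix.one_mul]
    rw [← Matrix.mul_assoc Q, hQ]
  rw [hD, diagonal_mul_diagonal] at hDD
  have := congrFun (congrFun hDD i) i
  simp only [diagonal_apply_eq] at this
  exact_mod_cast this

lemma exists_eq_pi_single_of_mul_self_of_sum_eq_one {x : m → ℝ} (hx : ∀ i, x i * x i = x i)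
    (hsum : ∑ i, x i = 1) : ∃ i₀, x = Pi.single i₀ 1 := by
  have hnonneg (i : m) : 0 ≤ x i := by rw [← hx i]; exact mul_self_nonneg _
  obtain ⟨i₀, hi₀⟩ : ∃ i, x i ≠ 0 := by
    by_contra! h
    simp [h] at hsum
  refine ⟨i₀, funext fun j => ?_⟩
  rcases eq_or_ne j i₀ with rfl | hj
  · simpa [hi₀] using hx j
  · have : x j + x i₀ ≤ ∑ i, x i := by
      rw [← Finset.sum_pair hj]
      exact Finset.sum_le_sum_of_subset_of_nonneg (Finset.subset_univ _) fun i _ _ => hnonneg i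
    have hone : x i₀ = 1 := by simpa [hi₀] using hx i₀
    simp only [Pi.single_apply, hj, if_false]
    linarith [hnonneg j]

lemma Matrix.IsHermitian.exists_eq_vecMulVec_of_idempotent {Q : Matrix m m ℂ}
    (hH : Q.IsHermitian) (hQ : Q * Q = Q) (htr : Q.trace = 1) :
    ∃ v : m → ℂ, Q = vecMulVec v (star v) ∧ star v ⬝ᵥ v = 1 := by
  have hU := hH.eigenvectorUnitary.2
  rw [hH.trace_eq_sum_eigenvalues] at htr
  obtain ⟨i₀, hi₀⟩ := exists_eq_pi_single_of_mul_self_of_sum_eq_one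
    (hH.eigenvalues_mul_self_of_idempotent hQ) (by simpa using congrArg Complex.re htr)
  refine ⟨(hH.eigenvectorUnitary : Matrix m m ℂ).col i₀, ?_, ?_⟩
  · conv_lhs => rw [hH.eq_conj_diagonal]
    rw [hi₀, ← colProj, colProj_eq_mul_single_mul, ← diagonal_single]
    congr 3
    funext i
    rcases eq_or_ne i i₀ with rfl | h <;> simp [*]
  · rw [star_col_dotProduct_col, Unitary.star_mul_self_of_mem hU, one_apply_eq]

lemma IsRankOneMeas.exists_eq_colProj {P : m → Matrix m m ℂ} (hP : IsRankOneMeas P) :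
    ∃ U ∈ unitaryGroup m ℂ, P = colProj U := by
  obtain ⟨⟨hH, hmul, -⟩, htr⟩ := hP
  choose v hv hnorm using fun k =>
    (hH k).exists_eq_vecMulVec_of_idempotent (by simpa using hmul k k) (htr k)
  have hfix (k : m) : P k *ᵥ v k = v k := by
    rw [hv k, vecMulVec_mulVec, hnorm]
    simp
  have hfix' (k : m) : star (v k) ᵥ* P k = star (v k) := by
    rw [hv k, vecMul_vecMulVec, hnorm, one_smul]
  have horth (j k : m) (h : j ≠ k) : star (v j) ⬝ᵥ v k = 0 :=
    calc star (v j) ⬝ᵥ v k = star (v j) ᵥ* P j ⬝ᵥ P k *ᵥ v k := by rw [hfix', hfix]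
      _ = star (v j) ⬝ᵥ (P j * P k) *ᵥ v k := by
        rw [← mulVec_mulVec, dotProduct_mulVec (star (v j)) (P j)]
      _ = 0 := by simp [show P j * P k = 0 by simpa [h] using hmul j k]
  refine ⟨of fun y k => v k y, ?_, funext hv⟩
  rw [mem_unitaryGroup_iff']
  ext j k
  rw [← star_col_dotProduct_col]
  change star (v j) ⬝ᵥ v k = _
  by_cases h : j = k
  · subst h; simpa using hnorm j
  · simpa [h] using horth j k h

lemma exists_isRankOneMeas_invariant {X : Matrix m m ℂ} (hX : X.IsHermitian) :
    ∃ P : m → Matrix m m ℂ, IsRankOneMeas P ∧ Invariant P X := by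
  have hU := hX.eigenvectorUnitary.2
  have h := invariant_colProj hU fun i => (hX.eigenvalues i : ℂ)
  rw [← hX.eq_conj_diagonal] at h
  exact ⟨_, isRankOneMeas_colProj hU, h⟩

end Projections

section PartialTrace

variable {α β : Type*}

lemma posSemidef_ptraceB [Fintype β] {N : Matrix (α × β) (α × β) ℂ}
    (hN : N.PosSemidef) : (ptraceB N).PosSemidef := by
  have : ptraceB N = ∑ y, N.submatrix (·, y) (·, y) := by
    ext i j
    simp [ptraceB, Matrix.sum_apply]
  rw [this]
  exact posSemidef_sum _ fun y _ => hN.submatrix _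

lemma posSemidef_ptraceA [Fintype α] {N : Matrix (α × β) (α × β) ℂ}
    (hN : N.PosSemidef) : (ptraceA N).PosSemidef := by
  have : ptraceA N = ∑ x, N.submatrix (x, ·) (x, ·) := by
    ext i j
    simp [ptraceA, Matrix.sum_apply]
  rw [this]
  exact posSemidef_sum _ fun x _ => hN.submatrix _

lemma trace_ptraceB [Fintype α] [Fintype β] (N : Matrix (α × β) (α × β) ℂ) :
    (ptraceB N).trace = N.trace := by
  simp [ptraceB, trace, Fintype.sum_prod_type]

lemma trace_ptraceA [Fintype α] [Fintype β] (N : Matrix (α × β) (α × β) ℂ) :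
    (ptraceA N).trace = N.trace := by
  simp only [ptraceA, trace, diag_apply, Fintype.sum_prod_type]
  exact Finset.sum_comm

lemma ptraceB_kronecker [Fintype β] (C : Matrix α α ℂ) (D : Matrix β β ℂ) :
    ptraceB (C ⊗ₖ D) = D.trace • C := by
  ext i j
  simp [ptraceB, trace, Finset.mul_sum, mul_comm]

variable [Fintype α] [DecidableEq α] [Fintype β]

lemma ptraceA_one_kronecker_mul (B : Matrix β β ℂ) (ρ : Matrix (α × β) (α × β) ℂ) :
    ptraceA ((1 ⊗ₖ B) * ρ) = B * ptraceA ρ := by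
  ext y z
  simp [ptraceA, Matrix.mul_apply, Fintype.sum_prod_type, one_apply, Finset.mul_sum]
  exact Finset.sum_comm

lemma one_kronecker_vecMulVec_sandwich (v : β → ℂ) (ρ : Matrix (α × β) (α × β) ℂ) :
    (1 ⊗ₖ vecMulVec v (star v)) * ρ * (1 ⊗ₖ vecMulVec v (star v)) =
      (of fun i j => ∑ y, ∑ z, star (v y) * ρ (i, y) (j, z) * v z) ⊗ₖ vecMulVec v (star v) := by
  ext ⟨i, y⟩ ⟨j, z⟩
  simp [Matrix.mul_apply, Fintype.sum_prod_type, one_apply, Finset.sum_mul, vecMulVec_apply]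
  rw [Finset.sum_comm]
  exact Finset.sum_congr rfl fun _ _ => Finset.sum_congr rfl fun _ _ => by ring

end PartialTrace

lemma Matrix.kronecker_sum {R l m n p ι : Type*} [CommSemiring R] [Fintype ι]
    (A : Matrix l m R) (B : ι → Matrix n p R) : A ⊗ₖ ∑ k, B k = ∑ k, A ⊗ₖ B k := by
  ext
  simp [Matrix.sum_apply, Finset.mul_sum]

section BlockDiagonal

variable {α β : Type*} [Fintype β] [DecidableEq β]

lemma blockDiagonal_eq_sum_kronecker_single (X : β → Matrix α α ℂ) :
    blockDiagonal X = ∑ k, X k ⊗ₖ single k k 1 := by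
  ext ⟨i, y⟩ ⟨j, z⟩
  rcases eq_or_ne y z with rfl | h
  · simp [blockDiagonal_apply, Matrix.sum_apply, single_apply]
  · simp [blockDiagonal_apply, Matrix.sum_apply, single_apply, h]
    exact (Finset.sum_eq_zero fun c _ => if_neg fun hc => h (hc.1.symm.trans hc.2)).symm

variable [Fintype α] [DecidableEq α]

lemma one_kronecker_mul_blockDiagonal_mul (U : Matrix β β ℂ) (X : β → Matrix α α ℂ) :
    (1 ⊗ₖ U) * blockDiagonal X * (1 ⊗ₖ star U) = ∑ k, X k ⊗ₖ colProj U k := by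
  rw [blockDiagonal_eq_sum_kronecker_single, Finset.mul_sum, Finset.sum_mul]
  refine Finset.sum_congr rfl fun k _ => ?_
  rw [← mul_kronecker_mul, ← mul_kronecker_mul, Matrix.one_mul, Matrix.mul_one,
    colProj_eq_mul_single_mul]

def blockUnitary (U : Matrix β β ℂ) (V : β → Matrix α α ℂ) : Matrix (α × β) (α × β) ℂ :=
  (1 ⊗ₖ U) * blockDiagonal V

variable {U : Matrix β β ℂ} {V : β → Matrix α α ℂ}

lemma blockUnitary_mem_unitaryGroup (hU : U ∈ unitaryGroup β ℂ)
    (hV : ∀ k, V k ∈ unitaryGroup α ℂ) : blockUnitary U V ∈ unitaryGroup (α × β) ℂ := by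
  refine Submonoid.mul_mem _ (kronecker_mem_unitary (Submonoid.one_mem _) hU) ?_
  rw [mem_unitaryGroup_iff', star_eq_conjTranspose, blockDiagonal_conjTranspose,
    ← blockDiagonal_mul]
  simp_rw [← star_eq_conjTranspose, Unitary.star_mul_self_of_mem (hV _)]
  exact blockDiagonal_one

lemma blockUnitary_conj_diagonal (U : Matrix β β ℂ) (V : β → Matrix α α ℂ) (d : β → α → ℂ) :
    blockUnitary U V * diagonal (fun r => d r.2 r.1) * star (blockUnitary U V) =
      ∑ k, (V k * diagonal (d k) * star (V k)) ⊗ₖ colProj U k := by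
  rw [blockUnitary, ← one_kronecker_mul_blockDiagonal_mul, ← blockDiagonal_diagonal, star_mul,
    star_eq_conjTranspose, star_eq_conjTranspose, blockDiagonal_conjTranspose,
    conjTranspose_kronecker, conjTranspose_one, blockDiagonal_mul, blockDiagonal_mul]
  simp only [Matrix.mul_assoc, star_eq_conjTranspose]

variable {M : β → Matrix α α ℂ}

lemma sum_kronecker_colProj_eq_blockUnitary_conj (hM : ∀ k, (M k).IsHermitian) :
    ∑ k, M k ⊗ₖ colProj U k =
      blockUnitary U (fun k => (hM k).eigenvectorUnitary) *
        diagonal (fun r => ((hM r.2).eigenvalues r.1 : ℂ)) *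
        star (blockUnitary U (fun k => (hM k).eigenvectorUnitary)) := by
  rw [blockUnitary_conj_diagonal (d := fun k l => ((hM k).eigenvalues l : ℂ))]
  exact Finset.sum_congr rfl fun k _ => by rw [← (hM k).eq_conj_diagonal]

lemma vnEntropy_sum_kronecker_colProj (hU : U ∈ unitaryGroup β ℂ)
    (hM : ∀ k, (M k).IsHermitian) :
    vnEntropy (∑ k, M k ⊗ₖ colProj U k) = ∑ k, vnEntropy (M k) := by
  rw [vnEntropy_eq_of_eq_conj_diagonal (blockUnitary_mem_unitaryGroup hU
      fun k => (hM k).eigenvectorUnitary.2) (sum_kronecker_colProj_eq_blockUnitary_conj hM),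
    Fintype.sum_prod_type, Finset.sum_comm, ← Finset.sum_neg_distrib]
  exact Finset.sum_congr rfl fun k _ => by rw [vnEntropy, dif_pos (hM k)]

lemma matLog_sum_kronecker_colProj (hU : U ∈ unitaryGroup β ℂ)
    (hM : ∀ k, (M k).IsHermitian) :
    matLog (∑ k, M k ⊗ₖ colProj U k) = ∑ k, matLog (M k) ⊗ₖ colProj U k := by
  rw [matLog_eq_conj_diagonal (blockUnitary_mem_unitaryGroup hU
      fun k => (hM k).eigenvectorUnitary.2) (sum_kronecker_colProj_eq_blockUnitary_conj hM),
    blockUnitary_conj_diagonal (d := fun k l => (Real.logb 2 ((hM k).eigenvalues l) : ℂ))]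
  exact Finset.sum_congr rfl fun k _ => by rw [matLog, dif_pos (hM k)]

end BlockDiagonal

lemma Matrix.trace_sum_mul_mul_mul_of_commute {R m ι : Type*} [CommRing R] [Fintype m] [DecidableEq m]
    [Fintype ι]
    {Q : ι → Matrix m m R} (hQ : ∀ k, Q k * Q k = Q k) (hsum : ∑ k, Q k = 1)
    {L : Matrix m m R} (hL : ∀ k, Q k * L = L * Q k) (ρ : Matrix m m R) :
    ((∑ k, Q k * ρ * Q k) * L).trace = (ρ * L).trace := by
  have hk (k : ι) : (Q k * ρ * Q k * L).trace = (ρ * L * Q k).trace :=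
    calc (Q k * ρ * Q k * L).trace = (Q k * (ρ * L * Q k)).trace := by
          simp only [Matrix.mul_assoc, hL]
      _ = (ρ * L * Q k * Q k).trace := trace_mul_comm _ _
      _ = (ρ * L * Q k).trace := by rw [Matrix.mul_assoc _ (Q k), hQ]
  rw [Finset.sum_mul, trace_sum, Finset.sum_congr rfl fun k _ => hk k, ← trace_sum,
    ← Finset.mul_sum, hsum, Matrix.mul_one]

section Entropy

variable {m : Type*} [Fintype m] [DecidableEq m]

lemma relEntropy_eq_vnEntropy_sub {ρ σ : Matrix m m ℂ} (hρ : ρ.IsHermitian) (hσ : σ.IsHermitian)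
    (h : (σ * matLog σ).trace = (ρ * matLog σ).trace) :
    relEntropy ρ σ = vnEntropy σ - vnEntropy ρ := by
  rw [relEntropy, Matrix.mul_sub, trace_sub, Complex.sub_re, ← h,
    vnEntropy_eq_neg_re_trace_mul_matLog hρ, vnEntropy_eq_neg_re_trace_mul_matLog hσ]
  ring

lemma vnEntropy_le_card_div_log_two {A : Matrix m m ℂ} (hA : A.PosSemidef) :
    vnEntropy A ≤ Fintype.card m / Real.log 2 := by
  have hterm {x : ℝ} (hx : 0 ≤ x) : -(x * Real.logb 2 x) ≤ 1 / Real.log 2 := by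
    have : -(x * Real.logb 2 x) = x.negMulLog / Real.log 2 := by
      rw [Real.logb, Real.negMulLog]
      ring
    rw [this]
    gcongr
    linarith [Real.negMulLog_le_one_sub_self hx]
  rw [vnEntropy, dif_pos hA.1, ← Finset.sum_neg_distrib]
  calc ∑ i, -(hA.1.eigenvalues i * Real.logb 2 (hA.1.eigenvalues i))
      ≤ ∑ _i : m, 1 / Real.log 2 :=
        Finset.sum_le_sum fun i _ => hterm (hA.eigenvalues_nonneg i)
    _ = Fintype.card m / Real.log 2 := by simp [div_eq_mul_inv]

lemma re_trace_mul_vnEntropy_inv_trace_smul {M : Matrix m m ℂ} (hM : M.PosSemidef) :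
    M.trace.re * vnEntropy (M.trace⁻¹ • M) =
      vnEntropy M + M.trace.re * Real.logb 2 M.trace.re := by
  set V := (hM.1.eigenvectorUnitary : Matrix m m ℂ)
  have hV : V ∈ unitaryGroup m ℂ := hM.1.eigenvectorUnitary.2
  set E := hM.1.eigenvalues
  have hE (i : m) : 0 ≤ E i := hM.eigenvalues_nonneg i
  have hdec : M = V * diagonal (fun i => (E i : ℂ)) * star V := hM.1.eq_conj_diagonal
  set t := ∑ i, E i
  have htr : M.trace = t := by
    rw [hdec, trace_conj_diagonal hV, Complex.ofReal_sum]
  rw [htr, Complex.ofReal_re, vnEntropy_eq_of_eq_conj_diagonal hV hdec]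
  rcases (show 0 ≤ t from Finset.sum_nonneg fun i _ => hE i).eq_or_lt with ht | ht
  · have hE0 (i : m) : E i = 0 := (Finset.sum_eq_zero_iff_of_nonneg fun i _ => hE i).mp ht.symm i
      (Finset.mem_univ i)
    simp [show t = 0 from ht.symm, hE0]
  have hdec' : (t : ℂ)⁻¹ • M = V * diagonal (fun i => ((E i / t : ℝ) : ℂ)) * star V := by
    rw [hdec, ← Matrix.smul_mul, ← Matrix.mul_smul, ← diagonal_smul]
    congr 3
    ext i
    simp [div_eq_inv_mul]
  rw [vnEntropy_eq_of_eq_conj_diagonal hV hdec', mul_neg, Finset.mul_sum]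
  have hterm (i : m) : t * (E i / t * Real.logb 2 (E i / t)) =
      E i * Real.logb 2 (E i) - E i * Real.logb 2 t := by
    rcases (hE i).eq_or_lt with h | h
    · simp [← h]
    · rw [Real.logb_div h.ne' ht.ne']
      field_simp
  simp only [hterm, Finset.sum_sub_distrib, ← Finset.sum_mul]
  ring

end Entropy

section Measurement

variable {α β κ : Type*} [Fintype α] [DecidableEq α] [Fintype β]

/-- `p_k ρ_k^A`, the conditional state of `A` before normalisation. -/
def weightedCondA (P : κ → Matrix β β ℂ) (ρ : Matrix (α × β) (α × β) ℂ) (k : κ) :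
    Matrix α α ℂ :=
  ptraceB ((1 ⊗ₖ P k) * ρ * (1 ⊗ₖ P k))

variable {P : κ → Matrix β β ℂ} {ρ : Matrix (α × β) (α × β) ℂ}

lemma trace_weightedCondA {k : κ} (hP : P k * P k = P k) :
    (weightedCondA P ρ k).trace = ((1 ⊗ₖ P k) * ρ).trace := by
  rw [weightedCondA, trace_ptraceB, trace_mul_cycle, ← mul_kronecker_mul, Matrix.one_mul, hP]

lemma posSemidef_weightedCondA (hρ : ρ.PosSemidef) {k : κ} (hP : (P k).IsHermitian) :
    (weightedCondA P ρ k).PosSemidef := by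
  have h := hρ.mul_mul_conjTranspose_same ((1 : Matrix α α ℂ) ⊗ₖ P k)
  rw [conjTranspose_kronecker, conjTranspose_one, hP.eq] at h
  exact posSemidef_ptraceB h

lemma posSemidef_postMeas [Fintype κ] (hρ : ρ.PosSemidef) (hP : ∀ k, (P k).IsHermitian) :
    (postMeas P ρ).PosSemidef := by
  refine posSemidef_sum _ fun k _ => ?_
  have h := hρ.mul_mul_conjTranspose_same ((1 : Matrix α α ℂ) ⊗ₖ P k)
  rwa [conjTranspose_kronecker, conjTranspose_one, (hP k).eq] at h

lemma ofReal_probOf (hρ : ρ.PosSemidef) {k : κ} (hH : (P k).IsHermitian) (hP : P k * P k = P k) :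
    (probOf P ρ k : ℂ) = ((1 ⊗ₖ P k) * ρ).trace := by
  rw [probOf, ← trace_weightedCondA hP]
  refine (Complex.eq_re_of_ofReal_le (r := 0) ?_).symm
  rw [Complex.ofReal_zero]
  exact (posSemidef_weightedCondA hρ hH).trace_nonneg

variable [DecidableEq β] {U : Matrix β β ℂ}

lemma one_kronecker_colProj_sandwich (hU : U ∈ unitaryGroup β ℂ) (ρ : Matrix (α × β) (α × β) ℂ)
    (k : β) : (1 ⊗ₖ colProj U k) * ρ * (1 ⊗ₖ colProj U k) =
      weightedCondA (colProj U) ρ k ⊗ₖ colProj U k := by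
  have h : (1 ⊗ₖ colProj U k) * ρ * (1 ⊗ₖ colProj U k) = _ ⊗ₖ colProj U k :=
    one_kronecker_vecMulVec_sandwich (U.col k) ρ
  rw [weightedCondA, h, ptraceB_kronecker, (isRankOneMeas_colProj hU).2 k, one_smul]

lemma postMeas_colProj (hU : U ∈ unitaryGroup β ℂ) (ρ : Matrix (α × β) (α × β) ℂ) :
    postMeas (colProj U) ρ = ∑ k, weightedCondA (colProj U) ρ k ⊗ₖ colProj U k :=
  Finset.sum_congr rfl fun k _ => one_kronecker_colProj_sandwich hU ρ k

lemma relEntropy_postMeas_colProj (hU : U ∈ unitaryGroup β ℂ) (hρ : ρ.PosSemidef) :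
    relEntropy ρ (postMeas (colProj U) ρ) = vnEntropy (postMeas (colProj U) ρ) - vnEntropy ρ := by
  have hP := isRankOneMeas_colProj hU
  refine relEntropy_eq_vnEntropy_sub hρ.1 (posSemidef_postMeas hρ hP.1.1).1 ?_
  have hL : matLog (postMeas (colProj U) ρ) =
      ∑ j, matLog (weightedCondA (colProj U) ρ j) ⊗ₖ colProj U j := by
    rw [postMeas_colProj hU]
    exact matLog_sum_kronecker_colProj hU fun k => (posSemidef_weightedCondA hρ (hP.1.1 k)).1
  refine Matrix.trace_sum_mul_mul_mul_of_commute (Q := fun k => (1 : Matrix α α ℂ) ⊗ₖ colProj U k)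
    (fun k => ?_) ?_ (fun k => ?_) ρ
  · rw [← mul_kronecker_mul, Matrix.one_mul, colProj_mul_self hU]
  · rw [← Matrix.kronecker_sum, hP.1.2.2, one_kronecker_one]
  · rw [hL, Finset.mul_sum, Finset.sum_mul]
    refine Finset.sum_congr rfl fun j _ => ?_
    rw [← mul_kronecker_mul, ← mul_kronecker_mul, Matrix.one_mul, Matrix.mul_one,
      (commute_colProj hU k j).eq]

lemma ptraceA_eq_conj_diagonal_probOf (hU : U ∈ unitaryGroup β ℂ) (hρ : ρ.PosSemidef)
    (hinv : Invariant (colProj U) (ptraceA ρ)) :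
    ptraceA ρ = U * diagonal (fun k => (probOf (colProj U) ρ k : ℂ)) * star U := by
  have hP := isRankOneMeas_colProj hU
  have hinv' : ∑ k, colProj U k * ptraceA ρ * colProj U k = ptraceA ρ := hinv
  conv_lhs => rw [← hinv', sum_colProj_mul_mul_colProj]
  congr 3
  ext k
  rw [← trace_colProj_mul, ← ptraceA_one_kronecker_mul, trace_ptraceA,
    ofReal_probOf hρ (hP.1.1 k) (colProj_mul_self hU k)]

lemma vnEntropy_postMeas_colProj (hU : U ∈ unitaryGroup β ℂ) (hρ : ρ.PosSemidef)
    (hinv : Invariant (colProj U) (ptraceA ρ)) :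
    vnEntropy (postMeas (colProj U) ρ) =
      vnEntropy (ptraceA ρ) + ∑ k, probOf (colProj U) ρ k * vnEntropy (condA (colProj U) ρ k) := by
  have hP := isRankOneMeas_colProj hU
  have hW (k : β) := posSemidef_weightedCondA hρ (hP.1.1 k)
  have hcond (k : β) : probOf (colProj U) ρ k * vnEntropy (condA (colProj U) ρ k) =
      vnEntropy (weightedCondA (colProj U) ρ k) +
        probOf (colProj U) ρ k * Real.logb 2 (probOf (colProj U) ρ k) := by
    have htr := trace_weightedCondA (ρ := ρ) (colProj_mul_self hU k)
    have hcondA : condA (colProj U) ρ k =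
        (weightedCondA (colProj U) ρ k).trace⁻¹ • weightedCondA (colProj U) ρ k := by
      rw [condA, htr]
      rfl
    rw [hcondA, probOf, ← htr]
    exact re_trace_mul_vnEntropy_inv_trace_smul (hW k)
  rw [postMeas_colProj hU, vnEntropy_sum_kronecker_colProj hU fun k => (hW k).1,
    vnEntropy_eq_of_eq_conj_diagonal hU (ptraceA_eq_conj_diagonal_probOf hU hρ hinv),
    Finset.sum_congr rfl fun k _ => hcond k, Finset.sum_add_distrib]
  ring

end Measurement

section RankOneMeasurement

variable {α β : Type*} [Fintype α] [DecidableEq α] [Fintype β] [DecidableEq β]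
  {ρ : Matrix (α × β) (α × β) ℂ} {P : β → Matrix β β ℂ}

lemma relEntropy_postMeas_eq (hρ : ρ.PosSemidef) (hP : IsRankOneMeas P)
    (hinv : Invariant P (ptraceA ρ)) :
    relEntropy ρ (postMeas P ρ) =
      vnEntropy (ptraceA ρ) + ∑ k, probOf P ρ k * vnEntropy (condA P ρ k) - vnEntropy ρ := by
  obtain ⟨U, hU, rfl⟩ := hP.exists_eq_colProj
  rw [relEntropy_postMeas_colProj hU hρ, vnEntropy_postMeas_colProj hU hρ hinv]

lemma relEntropy_postMeas_le (hρ : ρ.PosSemidef) (hP : IsRankOneMeas P) :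
    relEntropy ρ (postMeas P ρ) ≤ Fintype.card (α × β) / Real.log 2 - vnEntropy ρ := by
  obtain ⟨U, hU, rfl⟩ := hP.exists_eq_colProj
  rw [relEntropy_postMeas_colProj hU hρ]
  linarith [vnEntropy_le_card_div_log_two (posSemidef_postMeas hρ hP.1.1)]

end RankOneMeasurement

/-- N_RE(ρ^{AB}) + S_χ(ρ^{AB}) = I(ρ^{AB}), the quantum mutual information. -/
theorem stmt12 (ρ : Matrix (a × b) (a × b) ℂ) (hρ : IsDensity ρ) :
    NRE ρ + Schi ρ =
      vnEntropy (ptraceB ρ) + vnEntropy (ptraceA ρ) - vnEntropy ρ := by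
  set I := vnEntropy (ptraceB ρ) + vnEntropy (ptraceA ρ) - vnEntropy ρ
  set X := {x | ∃ P : b → Matrix b b ℂ, IsRankOneMeas P ∧ Invariant P (ptraceA ρ) ∧
    x = relEntropy ρ (postMeas P ρ)}
  have hSchi : {x | ∃ P : b → Matrix b b ℂ, IsRankOneMeas P ∧ Invariant P (ptraceA ρ) ∧
      x = vnEntropy (ptraceB ρ) - ∑ k, probOf P ρ k * vnEntropy (condA P ρ k)} =
      (I - ·) '' X := by
    ext x
    constructor
    · rintro ⟨P, hP, hinv, rfl⟩
      exact ⟨_, ⟨P, hP, hinv, rfl⟩, by rw [relEntropy_postMeas_eq hρ.1 hP hinv]; ring⟩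
    · rintro ⟨_, ⟨P, hP, hinv, rfl⟩, rfl⟩
      exact ⟨P, hP, hinv, by rw [relEntropy_postMeas_eq hρ.1 hP hinv]; ring⟩
  have hne : X.Nonempty :=
    let ⟨P, hP, hinv⟩ := exists_isRankOneMeas_invariant (posSemidef_ptraceA hρ.1).1
    ⟨_, P, hP, hinv, rfl⟩
  have hbdd : BddAbove X := ⟨_, by
    rintro _ ⟨P, hP, -, rfl⟩
    exact relEntropy_postMeas_le hρ.1 hP⟩
  rw [NRE, Schi, hSchi, ← Antitone.map_csSup_of_continuousAt (by fun_prop)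
    (fun x y h => sub_le_sub_left h I) hne hbdd]
  ring

end
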